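/- Optimality of likelihood-threshold trimming for fixed parameters: let P be an absolutely continuous probability measure on ℝᵖ, let g(x) = max_{j=1,…,k} π_j φ(x; θ_j) and B = {x : g(x) ≥ r} where r is chosen so that P[B] = 1−α. Then for any measurable set Z with P[Z] = 1−α, ∫_B Σ_j 1_{Z_j(θ,π)}(x) log(π_j φ(x;θ_j)) dP(x) ≥ ∫_Z Σ_j 1_{Z_j(θ,π)}(x) log(π_j φ(x;θ_j)) dP(x); i.e., among all regions of P-mass 1−α, the set B keeping the observations with largest maximum weighted density maximizes the classification log-likelihood for fixed (θ,π). -/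

import Mathlib

open MeasureTheory Matrix

/-- The `p`-variate Gaussian density with mean `m` and covariance matrix `S`. -/
noncomputable def gpdf {p : ℕ} (m : Fin p → ℝ) (S : Matrix (Fin p) (Fin p) ℝ)
    (x : Fin p → ℝ) : ℝ :=
  (2 * Real.pi) ^ (-(p : ℝ) / 2) * S.det ^ (-(1 : ℝ) / 2) *
    Real.exp (-(1 / 2) * ((x - m) ⬝ᵥ (S⁻¹ *ᵥ (x - m))))

/-- The weighted maximum-likelihood assignment region `Z_j(θ,π)`, with ties assigned to the
smallest index, so that the `Z_j` partition `ℝᵖ`. -/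
noncomputable def Zpart {p k : ℕ} (w : Fin k → ℝ) (m : Fin k → Fin p → ℝ)
    (S : Fin k → Matrix (Fin p) (Fin p) ℝ) (j : Fin k) : Set (Fin p → ℝ) :=
  {x | (∀ r, w r * gpdf (m r) (S r) x ≤ w j * gpdf (m j) (S j) x) ∧
    ∀ r < j, ¬ ∀ s, w s * gpdf (m s) (S s) x ≤ w r * gpdf (m r) (S r) x}

/-- The denominator `∑ⱼ πⱼ ∫_{Z_j(θ,π)} φ(x;θⱼ) dx` of the normalizing constant. -/
noncomputable def etaDen {p k : ℕ} (w : Fin k → ℝ) (m : Fin k → Fin p → ℝ)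
    (S : Fin k → Matrix (Fin p) (Fin p) ℝ) : ℝ :=
  ∑ j, w j * ∫ x in Zpart w m S j, gpdf (m j) (S j) x

/-- The normalizing constant `η(θ,π)`. -/
noncomputable def eta {p k : ℕ} (w : Fin k → ℝ) (m : Fin k → Fin p → ℝ)
    (S : Fin k → Matrix (Fin p) (Fin p) ℝ) : ℝ :=
  1 / etaDen w m S

/-- The truncated-Gaussian clustering density
`f₀(x) = η(θ,π) ∑ⱼ 1_{Z_j(θ,π)}(x) πⱼ φ(x;θⱼ)`. -/
noncomputable def clusterDensity {p k : ℕ} (w : Fin k → ℝ) (m : Fin k → Fin p → ℝ)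
    (S : Fin k → Matrix (Fin p) (Fin p) ℝ) (x : Fin p → ℝ) : ℝ :=
  eta w m S * ∑ j, Set.indicator (Zpart w m S j) (fun y => w j * gpdf (m j) (S j) y) x

/-!
The classification log-likelihood of a region `A` is `∫_A log g dP`, because on `Z_j` the
weighted density `π_j φ(·;θ_j)` is the maximum `g`. So the claim is a "bathtub" inequality for
the integrand `log g`: `B` and `Z` share `B ∩ Z`, and since `P[B \ Z] = P[Z \ B]` while
`log g ≥ log r` on `B \ Z` and `log g < log r` on `Z \ B`, the part of `B` outside `Z` carries
at least as much of the integral as the part of `Z` outside `B`.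
-/

open Set

section Bathtub

variable {α : Type*} [MeasurableSpace α] {μ : Measure α} {s t : Set α} {L : α → ℝ}

lemma measure_sdiff_eq_of_measure_eq [IsFiniteMeasure μ] (hs : MeasurableSet s)
    (ht : MeasurableSet t) (hst : μ s = μ t) : μ (s \ t) = μ (t \ s) := by
  have hs' := measure_inter_add_sdiff (μ := μ) s ht
  have ht' := measure_inter_add_sdiff (μ := μ) t hs
  rw [inter_comm, ← hst, ← hs'] at ht'
  exact (ENNReal.add_right_inj (measure_ne_top μ _)).mp ht'.symm

lemma setIntegral_sdiff_le_of_forall_le [IsFiniteMeasure μ] (hs : MeasurableSet s)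
    (ht : MeasurableSet t) (hst : μ (s \ t) = μ (t \ s)) (hL : Integrable L μ)
    (hle : ∀ x ∈ s \ t, ∀ y ∈ t \ s, L y ≤ L x) :
    ∫ y in t \ s, L y ∂μ ≤ ∫ x in s \ t, L x ∂μ := by
  by_cases h0 : μ (t \ s) = 0
  · simp [Measure.restrict_eq_zero.mpr h0, Measure.restrict_eq_zero.mpr (hst.trans h0)]
  obtain ⟨x₀, hx₀⟩ := nonempty_of_measure_ne_zero (hst ▸ h0 : μ (s \ t) ≠ 0)
  have hbdd : BddAbove (L '' (t \ s)) := ⟨L x₀, by rintro _ ⟨y, hy, rfl⟩; exact hle x₀ hx₀ y hy⟩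
  set c := sSup (L '' (t \ s))
  calc ∫ y in t \ s, L y ∂μ ≤ ∫ _ in t \ s, c ∂μ :=
        setIntegral_mono_on hL.integrableOn (integrableOn_const (measure_ne_top _ _))
          (ht.diff hs) fun y hy => le_csSup hbdd (mem_image_of_mem L hy)
    _ = ∫ _ in s \ t, c ∂μ := by rw [setIntegral_const, setIntegral_const, measureReal_def,
          measureReal_def, hst]
    _ ≤ ∫ x in s \ t, L x ∂μ :=
        setIntegral_mono_on (integrableOn_const (measure_ne_top _ _)) hL.integrableOn
          (hs.diff ht) fun x hx => csSup_le ((nonempty_of_measure_ne_zero h0).image L)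
            (by rintro _ ⟨y, hy, rfl⟩; exact hle x hx y hy)

lemma setIntegral_le_setIntegral_of_measure_eq [IsFiniteMeasure μ] (hs : MeasurableSet s)
    (ht : MeasurableSet t) (hst : μ s = μ t) (hL : Integrable L μ)
    (hle : ∀ x ∈ s \ t, ∀ y ∈ t \ s, L y ≤ L x) :
    ∫ x in t, L x ∂μ ≤ ∫ x in s, L x ∂μ := by
  rw [← integral_inter_add_sdiff ht (hL.integrableOn (s := s)),
    ← integral_inter_add_sdiff hs (hL.integrableOn (s := t)), inter_comm t s]
  exact add_le_add_right
    (setIntegral_sdiff_le_of_forall_le hs ht (measure_sdiff_eq_of_measure_eq hs ht hst) hL hle) _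

end Bathtub

lemma continuous_gpdf {p : ℕ} (m : Fin p → ℝ) (S : Matrix (Fin p) (Fin p) ℝ) :
    Continuous (gpdf m S) := by
  unfold gpdf
  simp only [dotProduct, mulVec, Pi.sub_apply]
  fun_prop

lemma gpdf_pos {p : ℕ} {m : Fin p → ℝ} {S : Matrix (Fin p) (Fin p) ℝ} (hS : S.PosDef)
    (x : Fin p → ℝ) : 0 < gpdf m S x := by
  have := hS.det_pos
  unfold gpdf
  positivity

section Zpart

variable {p k : ℕ} {w : Fin k → ℝ} {m : Fin k → Fin p → ℝ}
  {S : Fin k → Matrix (Fin p) (Fin p) ℝ}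

lemma measurable_weighted_gpdf (j : Fin k) : Measurable fun x => w j * gpdf (m j) (S j) x :=
  measurable_const.mul (continuous_gpdf (m j) (S j)).measurable

lemma measurable_iSup_weighted_gpdf : Measurable fun x => ⨆ j, w j * gpdf (m j) (S j) x :=
  Measurable.iSup measurable_weighted_gpdf

lemma iSup_weighted_gpdf_pos {j₀ : Fin k} (hw : 0 < w j₀) (hS : (S j₀).PosDef)
    (x : Fin p → ℝ) : 0 < ⨆ j, w j * gpdf (m j) (S j) x :=
  (mul_pos hw (gpdf_pos hS x)).trans_le <|
    le_ciSup (f := fun j => w j * gpdf (m j) (S j) x) (Finite.bddAbove_range _) j₀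

lemma measurableSet_Zpart (j : Fin k) : MeasurableSet (Zpart w m S j) := by
  have hle : ∀ r s, MeasurableSet {x | w r * gpdf (m r) (S r) x ≤ w s * gpdf (m s) (S s) x} :=
    fun r s => measurableSet_le (measurable_weighted_gpdf r) (measurable_weighted_gpdf s)
  exact measurableSet_setOfPred.mpr <| .and
    (.forall fun r => measurableSet_setOfPred.mp (hle r j))
    (.forall fun r => .forall fun _ =>
      (Measurable.forall fun s => measurableSet_setOfPred.mp (hle s r)).not)

lemma pairwise_disjoint_Zpart : Pairwise (Function.onFun Disjoint (Zpart w m S)) := by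
  intro i j hij
  refine disjoint_left.mpr fun x hxi hxj => ?_
  rcases hij.lt_or_gt with h | h
  · exact hxj.2 i h hxi.1
  · exact hxi.2 j h hxj.1

lemma iUnion_Zpart [Nonempty (Fin k)] : ⋃ j, Zpart w m S j = univ := by
  refine eq_univ_of_forall fun x => mem_iUnion.mpr ?_
  obtain ⟨j, hj, hmin⟩ := wellFounded_lt.has_min
    {j | ∀ s, w s * gpdf (m s) (S s) x ≤ w j * gpdf (m j) (S j) x}
    (Finite.exists_max fun j => w j * gpdf (m j) (S j) x)
  exact ⟨j, hj, fun r hr hrmax => hmin r hrmax hr⟩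

lemma weighted_gpdf_eq_iSup_of_mem_Zpart [Nonempty (Fin k)] {j : Fin k} {x : Fin p → ℝ}
    (hx : x ∈ Zpart w m S j) : w j * gpdf (m j) (S j) x = ⨆ s, w s * gpdf (m s) (S s) x :=
  le_antisymm (le_ciSup (f := fun s => w s * gpdf (m s) (S s) x) (Finite.bddAbove_range _) j)
    (ciSup_le hx.1)

lemma sum_setIntegral_Zpart_inter [Nonempty (Fin k)] {μ : Measure (Fin p → ℝ)} (F : ℝ → ℝ)
    {A : Set (Fin p → ℝ)} (hA : MeasurableSet A)
    (hF : IntegrableOn (fun x => F (⨆ j, w j * gpdf (m j) (S j) x)) A μ) :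
    ∑ j, ∫ x in Zpart w m S j ∩ A, F (w j * gpdf (m j) (S j) x) ∂μ =
      ∫ x in A, F (⨆ j, w j * gpdf (m j) (S j) x) ∂μ := by
  calc ∑ j, ∫ x in Zpart w m S j ∩ A, F (w j * gpdf (m j) (S j) x) ∂μ
      = ∑ j, ∫ x in Zpart w m S j ∩ A, F (⨆ s, w s * gpdf (m s) (S s) x) ∂μ :=
        Finset.sum_congr rfl fun j _ => setIntegral_congr_fun
          ((measurableSet_Zpart j).inter hA) fun x hx => by
            rw [weighted_gpdf_eq_iSup_of_mem_Zpart hx.1]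
    _ = ∫ x in ⋃ j, Zpart w m S j ∩ A, F (⨆ s, w s * gpdf (m s) (S s) x) ∂μ :=
        (integral_iUnion_fintype (fun j => (measurableSet_Zpart j).inter hA)
          (fun i j hij => (pairwise_disjoint_Zpart hij).mono inter_subset_left inter_subset_left)
          fun _ => hF.mono_set inter_subset_right).symm
    _ = ∫ x in A, F (⨆ j, w j * gpdf (m j) (S j) x) ∂μ := by
        rw [← iUnion_inter, iUnion_Zpart, univ_inter]

end Zpart

theorem threshold_trimming_optimal_general {p k : ℕ} (P : Measure (Fin p → ℝ))
    [IsProbabilityMeasure P] (α : ℝ)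
    (w : Fin k → ℝ) (m : Fin k → Fin p → ℝ) (S : Fin k → Matrix (Fin p) (Fin p) ℝ)
    (hwpos : ∃ j, 0 < w j)
    (hS : ∀ j, (S j).PosDef)
    (r : ℝ) (B : Set (Fin p → ℝ))
    (hBdef : B = {x | r ≤ ⨆ j, w j * gpdf (m j) (S j) x})
    (hBα : P B = ENNReal.ofReal (1 - α))
    (hint : Integrable (fun x => Real.log (⨆ j, w j * gpdf (m j) (S j) x)) P)
    (Z : Set (Fin p → ℝ)) (hZ : MeasurableSet Z) (hZα : P Z = ENNReal.ofReal (1 - α)) :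
    (∑ j, ∫ x in Zpart w m S j ∩ Z, Real.log (w j * gpdf (m j) (S j) x) ∂P) ≤
      ∑ j, ∫ x in Zpart w m S j ∩ B, Real.log (w j * gpdf (m j) (S j) x) ∂P := by
  obtain ⟨j₀, hj₀⟩ := hwpos
  have : Nonempty (Fin k) := ⟨j₀⟩
  have hB : MeasurableSet B :=
    hBdef ▸ measurableSet_le measurable_const measurable_iSup_weighted_gpdf
  rw [sum_setIntegral_Zpart_inter Real.log hZ hint.integrableOn,
    sum_setIntegral_Zpart_inter Real.log hB hint.integrableOn]
  refine setIntegral_le_setIntegral_of_measure_eq hB hZ (hBα.trans hZα.symm) hint ?_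
  subst hBdef
  rintro x ⟨hxB, -⟩ y ⟨-, hyB⟩
  exact Real.log_le_log (iSup_weighted_gpdf_pos hj₀ (hS j₀) y) ((not_le.mp hyB).le.trans hxB)

/-- Optimality of likelihood-threshold trimming for fixed parameters: among all regions of
`P`-mass `1−α`, the superlevel set `B = {x : g(x) ≥ r}` of the maximal weighted density
`g(x) = maxⱼ πⱼ φ(x;θⱼ)` maximizes the classification log-likelihood. -/
theorem threshold_trimming_optimal {p k : ℕ} (P : Measure (Fin p → ℝ))
    [IsProbabilityMeasure P] (hac : P ≪ volume) (α : ℝ) (hα : 0 ≤ α) (hα1 : α < 1)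
    (w : Fin k → ℝ) (m : Fin k → Fin p → ℝ) (S : Fin k → Matrix (Fin p) (Fin p) ℝ)
    (hw : ∀ j, 0 ≤ w j) (hw1 : (∑ j, w j) = 1) (hwpos : ∃ j, 0 < w j)
    (hS : ∀ j, (S j).PosDef)
    (r : ℝ) (B : Set (Fin p → ℝ))
    (hBdef : B = {x | r ≤ ⨆ j, w j * gpdf (m j) (S j) x})
    (hBα : P B = ENNReal.ofReal (1 - α))
    (hint : Integrable (fun x => Real.log (⨆ j, w j * gpdf (m j) (S j) x)) P)
    (Z : Set (Fin p → ℝ)) (hZ : MeasurableSet Z) (hZα : P Z = ENNReal.ofReal (1 - α)) :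
    (∑ j, ∫ x in Zpart w m S j ∩ Z, Real.log (w j * gpdf (m j) (S j) x) ∂P) ≤
      ∑ j, ∫ x in Zpart w m S j ∩ B, Real.log (w j * gpdf (m j) (S j) x) ∂P :=
  threshold_trimming_optimal_general P α w m S hwpos hS r B hBdef hBα hint Z hZ hZα
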